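/- For every standard type B partition ρ of ⟨n⟩ with 2k+1 blocks, los_{B'}(ρ) ≥ k(k+1), with the minimum k(k+1) attained by the partition where S_0 = {-(n-k),...,-1,0,1,...,n-k} and the remaining blocks are singletons of the largest k values and their negatives. -/

import Mathlib

open Finset Polynomial

/-- The ground set ⟨n⟩ = {-n, ..., -1, 0, 1, ..., n}. -/
noncomputable def angleB (n : ℕ) : Finset ℤ := Finset.Icc (-(n : ℤ)) (n : ℤ)

/-- An ordered type B (signed) partition of ⟨n⟩ with 2k+1 blocks:
pairwise disjoint nonempty blocks covering ⟨n⟩, with 0 ∈ S₀, S₀ closed under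
negation, and S_{2i} = -S_{2i-1} for i ≥ 1. -/
def IsOrderedB (n k : ℕ) (S : Fin (2*k+1) → Finset ℤ) : Prop :=
  (∀ i, (S i).Nonempty) ∧
  (∀ i j, i ≠ j → Disjoint (S i) (S j)) ∧
  (Finset.univ.biUnion S = angleB n) ∧
  ((0 : ℤ) ∈ S 0) ∧
  (∀ x ∈ S 0, -x ∈ S 0) ∧
  (∀ i : ℕ, 1 ≤ i → ∀ h : 2*i < 2*k+1,
    S ⟨2*i, h⟩ = (S ⟨2*i-1, by omega⟩).image (fun x => -x))

/-- m_j = min |S_j| (0 if the block is empty). -/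
def mB {m : ℕ} (S : Fin m → Finset ℤ) (j : Fin m) : ℤ :=
  WithTop.untopD 0 (((S j).image (fun x => |x|)).min)

/-- M_j = max |S_j| (0 if the block is empty). -/
def MB {m : ℕ} (S : Fin m → Finset ℤ) (j : Fin m) : ℤ :=
  WithBot.unbotD 0 (((S j).image (fun x => |x|)).max)

/-- A standard type B partition: ordered, with m_{2i} ∈ S_{2i} for i ≥ 1 and
0 = m₀ < m₂ < m₄ < ... < m_{2k}. -/
def IsStandardB (n k : ℕ) (S : Fin (2*k+1) → Finset ℤ) : Prop :=
  IsOrderedB n k S ∧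
  (∀ i : ℕ, 1 ≤ i → ∀ h : 2*i < 2*k+1, mB S ⟨2*i, h⟩ ∈ S ⟨2*i, h⟩) ∧
  (∀ i : ℕ, ∀ h : 2*(i+1) < 2*k+1, mB S ⟨2*i, by omega⟩ < mB S ⟨2*(i+1), h⟩)

/-- inv ρ: number of pairs (s, S_j) with s ∈ S_i for some i < j and s ≥ m_j. -/
noncomputable def invB {m : ℕ} (S : Fin m → Finset ℤ) : ℕ :=
  {p : ℤ × Fin m | (∃ i < p.2, p.1 ∈ S i) ∧ mB S p.2 ≤ p.1}.ncard

/-- ros_B = inv. -/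
noncomputable def rosB {m : ℕ} (S : Fin m → Finset ℤ) : ℕ := invB S

/-- los_{B'}: pairs (s, S_j) with s ∈ S_i for some i > j and s ≥ m_j. -/
noncomputable def losB' {m : ℕ} (S : Fin m → Finset ℤ) : ℕ :=
  {p : ℤ × Fin m | (∃ i, p.2 < i ∧ p.1 ∈ S i) ∧ mB S p.2 ≤ p.1}.ncard

/-- lob_{B'}: pairs (s, S_j) with s ∈ S_i for some i > j and 0 < s ≤ m_j. -/
noncomputable def lobB' {m : ℕ} (S : Fin m → Finset ℤ) : ℕ :=
  {p : ℤ × Fin m | (∃ i, p.2 < i ∧ p.1 ∈ S i) ∧ 0 < p.1 ∧ p.1 ≤ mB S p.2}.ncard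

/-- rcb_B: pairs (s, S_j) with s ∈ S_i for some i < j and 0 < s ≤ M_j. -/
noncomputable def rcbB {m : ℕ} (S : Fin m → Finset ℤ) : ℕ :=
  {p : ℤ × Fin m | (∃ i < p.2, p.1 ∈ S i) ∧ 0 < p.1 ∧ p.1 ≤ MB S p.2}.ncard

/-- rob_B: pairs (s, S_j) with s ∈ S_i for some i < j and 0 < s ≤ m_j. -/
noncomputable def robB {m : ℕ} (S : Fin m → Finset ℤ) : ℕ :=
  {p : ℤ × Fin m | (∃ i < p.2, p.1 ∈ S i) ∧ 0 < p.1 ∧ p.1 ≤ mB S p.2}.ncard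

/-- rcs_B: pairs (s, S_j) with s ∈ S_i for some i < j and s ≥ M_j. -/
noncomputable def rcsB {m : ℕ} (S : Fin m → Finset ℤ) : ℕ :=
  {p : ℤ × Fin m | (∃ i < p.2, p.1 ∈ S i) ∧ MB S p.2 ≤ p.1}.ncard

/-- Type B Stirling numbers of the second kind. -/
def StirB : ℕ → ℕ → ℕ
  | 0, 0 => 1
  | 0, _+1 => 0
  | n+1, 0 => StirB n 0
  | n+1, k+1 => StirB n k + (2*(k+1)+1) * StirB n (k+1)

/-- [m] = 1 + q + ... + q^{m-1}. -/
noncomputable def qb (m : ℕ) : Polynomial ℤ := ∑ i ∈ Finset.range m, (Polynomial.X : Polynomial ℤ) ^ i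

/-- Type B q-Stirling numbers of the second kind. -/
noncomputable def qStirB : ℕ → ℕ → Polynomial ℤ
  | 0, 0 => 1
  | 0, _+1 => 0
  | n+1, 0 => qStirB n 0
  | n+1, k+1 => qStirB n k + qb (2*(k+1)+1) * qStirB n (k+1)

/-- [2k]!! = [2k][2k-2]⋯[2]. -/
noncomputable def qdf : ℕ → Polynomial ℤ
  | 0 => 1
  | k+1 => qb (2*(k+1)) * qdf k

/-- The complement map on ⟨n⟩: i ↦ n+1-i for i > 0, -i ↦ -(n+1-i), 0 ↦ 0. -/
def complB (n : ℕ) (x : ℤ) : ℤ :=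
  if 0 < x then (n : ℤ) + 1 - x else if x < 0 then -((n : ℤ) + 1) - x else 0

/-- Complement of a partition, blockwise. -/
def complP (n : ℕ) {m : ℕ} (S : Fin m → Finset ℤ) : Fin m → Finset ℤ :=
  fun j => (S j).image (complB n)

/-- The index of the block paired with block i: 0 ↦ 0, 2ℓ-1 ↦ 2ℓ, 2ℓ ↦ 2ℓ-1. -/
def pairIdx (k : ℕ) (i : Fin (2*k+1)) : Fin (2*k+1) :=
  if i.val = 0 then i
  else if h2 : i.val % 2 = 1 then ⟨i.val + 1, by omega⟩ else ⟨i.val - 1, by omega⟩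

/-- The minimizing partition: S₀ = {-(n-k),...,n-k} and the remaining blocks are
singletons {-(n-k+ℓ)}, {n-k+ℓ} for ℓ = 1,...,k. -/
noncomputable def minPartB (n k : ℕ) : Fin (2*k+1) → Finset ℤ :=
  fun t =>
    if t.val = 0 then Finset.Icc (-((n : ℤ) - k)) ((n : ℤ) - k)
    else if t.val % 2 = 1 then {-((n : ℤ) - k + (((t.val + 1) / 2 : ℕ) : ℤ))}
    else {(n : ℤ) - k + ((t.val / 2 : ℕ) : ℤ)}

/-! For `1 ≤ l ≤ k` the minimum `m_{2l}` lies in `S_{2l}` and is at least `m_j` for every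
`j < 2l`, since `m_{2i-1} = m_{2i}` and the `m_{2i}` increase. So every pair `(m_{2l}, S_j)`
with `j < 2l` is counted by `los_{B'}`, and these `∑ 2l = k(k+1)` pairs are distinct. If moreover
every block but `S_0` is a singleton, a counted element `s ≥ m_j ≥ 0` of a later block must be
positive, hence it is the element `m_{2l}` of some `S_{2l}` with `2l > j`: these are all the
counted pairs, and `minPartB` is such a partition. -/

section mB

variable {m : ℕ} (S : Fin m → Finset ℤ)

lemma mB_eq_min' {j : Fin m} (h : (S j).Nonempty) :
    mB S j = ((S j).image (fun x => |x|)).min' (h.image _) := by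
  rw [mB, ← Finset.coe_min', WithTop.untopD_coe]

lemma mB_le_abs {j : Fin m} {x : ℤ} (hx : x ∈ S j) : mB S j ≤ |x| := by
  rw [mB_eq_min' S ⟨x, hx⟩]
  exact Finset.min'_le _ _ (Finset.mem_image_of_mem _ hx)

lemma mB_nonneg (j : Fin m) : 0 ≤ mB S j := by
  rcases (S j).eq_empty_or_nonempty with h | h
  · simp [mB, h]
  · rw [mB_eq_min' S h]
    exact Finset.le_min' _ _ _ (by simp)

lemma mB_eq_abs_of_eq_singleton {j : Fin m} {v : ℤ} (h : S j = {v}) : mB S j = |v| := by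
  simp [mB, h]

lemma mB_eq_of_eq_image_neg {i j : Fin m} (h : S i = (S j).image (fun x => -x)) :
    mB S i = mB S j := by
  simp only [mB, h, Finset.image_image, Function.comp_def, abs_neg]

lemma setOf_losB'_finite :
    {p : ℤ × Fin m | (∃ i, p.2 < i ∧ p.1 ∈ S i) ∧ mB S p.2 ≤ p.1}.Finite :=
  ((Finset.univ.biUnion S).finite_toSet.prod Set.finite_univ).subset
    fun _ ⟨⟨i, _, hi⟩, _⟩ =>
      ⟨Finset.mem_biUnion.mpr ⟨i, Finset.mem_univ _, hi⟩, trivial⟩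

end mB

def evenMinB {k : ℕ} (S : Fin (2*k+1) → Finset ℤ) (l : Fin (k+1)) : ℤ :=
  mB S ⟨2*l, by omega⟩

def losIndexB (k : ℕ) : Finset (Fin (k+1) × Fin (2*k+1)) :=
  {p | p.2.val < 2 * p.1.val}

lemma card_losIndexB (k : ℕ) : #(losIndexB k) = k*(k+1) := by
  have hrow (l : Fin (k+1)) : #{j : Fin (2*k+1) | j.val < 2 * l.val} = 2 * l.val := by
    rw [Fin.card_filter_val_lt]; omega
  rw [losIndexB, Finset.card_filter, Fintype.sum_prod_type]
  simp only [← Finset.card_filter, hrow]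
  rw [Fin.sum_univ_eq_sum_range (fun l => 2 * l), ← Finset.mul_sum, mul_comm,
    Finset.sum_range_id_mul_two]
  simp [mul_comm]

def losPairB {k : ℕ} (S : Fin (2*k+1) → Finset ℤ) (p : Fin (k+1) × Fin (2*k+1)) :
    ℤ × Fin (2*k+1) :=
  (evenMinB S p.1, p.2)

namespace IsStandardB

variable {n k : ℕ} {S : Fin (2*k+1) → Finset ℤ} (hS : IsStandardB n k S)
include hS

lemma strictMono_evenMinB : StrictMono (evenMinB S) :=
  Fin.strictMono_iff_lt_succ.2 fun i => hS.2.2 i (by omega)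

lemma evenMinB_mem {l : Fin (k+1)} (hl : (l : ℕ) ≠ 0) :
    evenMinB S l ∈ S ⟨2*l, by omega⟩ :=
  hS.2.1 l (by omega) _

lemma even_block_eq (j : Fin (2*k+1)) :
    S ⟨2*((j+1)/2), by omega⟩ = S j ∨
      S ⟨2*((j+1)/2), by omega⟩ = (S j).image (fun x => -x) := by
  obtain ⟨j, hj⟩ := j
  rcases Nat.even_or_odd j with ⟨a, rfl⟩ | ⟨a, rfl⟩
  · left
    congr 2
    dsimp only
    omega
  · right
    have hpair := hS.1.2.2.2.2.2 (a+1) (by omega) (by omega)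
    simp only [show 2*(a+1)-1 = 2*a+1 by omega] at hpair
    simp only [show (2*a+1+1)/2 = a+1 by omega]
    exact hpair

lemma mB_eq_evenMinB (j : Fin (2*k+1)) : mB S j = evenMinB S ⟨(j+1)/2, by omega⟩ := by
  simp only [evenMinB]
  rcases hS.even_block_eq j with h | h
  · simp only [mB, h]
  · exact (mB_eq_of_eq_image_neg S h).symm

lemma abs_eq_evenMinB_of_mem {i : Fin (2*k+1)} (hi : i ≠ 0) {s : ℤ} (hs : s ∈ S i)
    (hcard : #(S ⟨2*((i+1)/2), by omega⟩) ≤ 1) :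
    |s| = evenMinB S ⟨(i+1)/2, by omega⟩ := by
  have hi' := Fin.val_ne_of_ne hi
  rw [Fin.val_zero] at hi'
  have hm := hS.evenMinB_mem (l := ⟨(i+1)/2, by omega⟩) (by dsimp only; omega)
  dsimp only [Fin.val_mk] at hm
  have hnn : 0 ≤ evenMinB S ⟨(i+1)/2, by omega⟩ := mB_nonneg S _
  rw [← abs_of_nonneg hnn]
  rcases hS.even_block_eq i with h | h
  · rw [h] at hcard hm
    rw [Finset.card_le_one.1 hcard s hs _ hm]
  · rw [h] at hcard hm
    rw [← abs_neg, Finset.card_le_one.1 hcard _ (Finset.mem_image_of_mem _ hs) _ hm]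

lemma le_losB' : k*(k+1) ≤ losB' S := by
  rw [losB', ← card_losIndexB, ← Set.ncard_coe_finset]
  refine Set.ncard_le_ncard_of_injOn (losPairB S) ?_ ?_ (setOf_losB'_finite S)
  · rintro ⟨l, j⟩ hp
    have hlj : j.val < 2 * l.val := by simpa [losIndexB] using hp
    refine ⟨⟨⟨2*l, by omega⟩, hlj, hS.evenMinB_mem (by omega)⟩, ?_⟩
    show mB S j ≤ evenMinB S l
    rw [hS.mB_eq_evenMinB]
    exact hS.strictMono_evenMinB.monotone (Fin.mk_le_mk.2 (by omega))
  · rintro ⟨l, j⟩ _ ⟨l', j'⟩ _ h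
    simp only [losPairB, Prod.mk.injEq] at h
    rw [hS.strictMono_evenMinB.injective h.1, h.2]

lemma losB'_le_of_card_le_one (hcard : ∀ i ≠ 0, #(S i) ≤ 1) : losB' S ≤ k*(k+1) := by
  rw [losB', ← card_losIndexB, ← Set.ncard_coe_finset]
  refine (Set.ncard_le_ncard (t := losPairB S '' ↑(losIndexB k)) ?_).trans
    (Set.ncard_image_le (Finset.finite_toSet _))
  rintro ⟨s, j⟩ ⟨⟨i, hji, hs⟩, hjs⟩
  dsimp only at hji hs hjs
  have hji' : j.val < i.val := hji
  have hi : i ≠ 0 := by rintro rfl; exact Fin.not_lt_zero j hji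
  refine ⟨(⟨(i+1)/2, by omega⟩, j), ?_, ?_⟩
  · simp only [losIndexB, Finset.coe_filter, Finset.mem_univ, true_and]
    show j.val < 2 * ((i.val + 1) / 2)
    omega
  · have hs' := hS.abs_eq_evenMinB_of_mem hi hs
      (hcard _ fun h => by simp only [Fin.ext_iff, Fin.val_zero] at h; omega)
    rw [abs_of_nonneg ((mB_nonneg S j).trans hjs)] at hs'
    rw [losPairB, hs']

end IsStandardB

section minPartB

variable {n k : ℕ}

def minPartBIdx (n k : ℕ) (x : ℤ) : ℤ :=
  if -((n : ℤ) - k) ≤ x ∧ x ≤ (n : ℤ) - k then 0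
  else if 0 < x then 2 * (x - ((n : ℤ) - k))
  else 2 * (-x - ((n : ℤ) - k)) - 1

lemma mem_minPartB_iff (hk : k ≤ n) {t : Fin (2*k+1)} {x : ℤ} :
    x ∈ minPartB n k t ↔ x ∈ angleB n ∧ (t : ℤ) = minPartBIdx n k x := by
  have ht := t.isLt
  unfold minPartB minPartBIdx angleB
  split_ifs <;> simp only [Finset.mem_Icc, Finset.mem_singleton] <;> omega

lemma minPartB_even {i : ℕ} (hi : i ≠ 0) (h : 2*i < 2*k+1) :
    minPartB n k ⟨2*i, h⟩ = {(n : ℤ) - k + i} := by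
  simp only [minPartB, show 2*i/2 = i by omega]
  rw [if_neg (by omega), if_neg (by omega)]

lemma minPartB_odd {i : ℕ} (hi : i ≠ 0) (h : 2*i-1 < 2*k+1) :
    minPartB n k ⟨2*i-1, h⟩ = {-((n : ℤ) - k + i)} := by
  simp only [minPartB, show (2*i-1+1)/2 = i by omega]
  rw [if_neg (by omega), if_pos (by omega)]

lemma card_minPartB_le_one {t : Fin (2*k+1)} (ht : t ≠ 0) : #(minPartB n k t) ≤ 1 := by
  have ht' : t.val ≠ 0 := fun h => ht (Fin.ext h)
  unfold minPartB
  split_ifs with h0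
  · exact absurd h0 ht'
  all_goals simp

lemma mB_minPartB_even (hk : k ≤ n) (i : ℕ) (h : 2*i < 2*k+1) :
    mB (minPartB n k) ⟨2*i, h⟩ = if i = 0 then 0 else (n : ℤ) - k + i := by
  split_ifs with hi
  · subst hi
    have h0 : (0 : ℤ) ∈ minPartB n k ⟨2*0, h⟩ :=
      (mem_minPartB_iff hk).2 ⟨by simp [angleB], by simp [minPartBIdx]; omega⟩
    exact le_antisymm (by simpa using mB_le_abs _ h0) (mB_nonneg _ _)
  · rw [mB_eq_abs_of_eq_singleton _ (minPartB_even hi h), abs_of_nonneg (by omega)]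

lemma minPartB_isStandardB (hk : k ≤ n) : IsStandardB n k (minPartB n k) := by
  refine ⟨⟨?nonempty, ?disjoint, ?cover, ?zero_mem, ?neg_mem, ?pairing⟩, ?min_mem, ?chain⟩
  case nonempty =>
    intro t
    unfold minPartB
    split_ifs
    · exact Finset.nonempty_Icc.2 (by omega)
    all_goals exact Finset.singleton_nonempty _
  case disjoint =>
    intro i j hij
    refine Finset.disjoint_left.2 fun x hi hj => hij (Fin.ext ?_)
    rw [mem_minPartB_iff hk] at hi hj
    omega
  case cover =>
    ext x
    simp only [Finset.mem_biUnion, Finset.mem_univ, true_and, mem_minPartB_iff hk]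
    refine ⟨fun ⟨_, hx, _⟩ => hx,
      fun hx => ⟨⟨(minPartBIdx n k x).toNat, ?_⟩, hx, ?_⟩⟩
    all_goals simp only [angleB, Finset.mem_Icc, minPartBIdx] at hx ⊢; split_ifs <;> omega
  case zero_mem =>
    exact (mem_minPartB_iff hk).2 ⟨by simp [angleB], by simp [minPartBIdx]; omega⟩
  case neg_mem =>
    intro x hx
    simp only [minPartB, Fin.val_zero, if_true, Finset.mem_Icc] at hx ⊢
    omega
  case pairing =>
    intro i hi h
    rw [minPartB_even (by omega) h, minPartB_odd (by omega) (by omega)]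
    simp
  case min_mem =>
    intro i hi h
    rw [mB_minPartB_even hk i h, if_neg (by omega), minPartB_even (by omega) h]
    exact Finset.mem_singleton_self _
  case chain =>
    intro i h
    rw [mB_minPartB_even hk i (by omega), mB_minPartB_even hk (i+1) h,
      if_neg i.succ_ne_zero]
    split_ifs <;> omega

end minPartB

/-- los_{B'}(ρ) ≥ k(k+1) for every standard type B partition ρ of ⟨n⟩
with 2k+1 blocks, and the minimum is attained by the partition minPartB. -/
theorem stmt19 (n k : ℕ) (hk : k ≤ n) :
    (∀ S : Fin (2*k+1) → Finset ℤ, IsStandardB n k S → k*(k+1) ≤ losB' S) ∧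
    IsStandardB n k (minPartB n k) ∧ losB' (minPartB n k) = k*(k+1) := by
  have hmin := minPartB_isStandardB hk
  refine ⟨fun _ hS => hS.le_losB', hmin, le_antisymm ?_ hmin.le_losB'⟩
  exact hmin.losB'_le_of_card_le_one fun _ ht => card_minPartB_le_one ht
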